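/- For m ≥ 1 and every integer N ≥ 2m+1, there exists a polynomial G in x, y with: G(ηx, ηy) = G(x,y) for η a primitive m-th root of unity; G(x, 1−x) = 1 identically; all coefficients of G non-negative; G(0,0) = 0; and G has exactly N monomials. -/
import Mathlib

open MvPolynomial

noncomputable def dd (i j : ℕ) : Fin 2 →₀ ℕ := Finsupp.single 0 i + Finsupp.single 1 j

lemma dd_apply0 (i j : ℕ) : dd i j 0 = i := by simp [dd, Finsupp.single_apply]
lemma dd_apply1 (i j : ℕ) : dd i j 1 = j := by simp [dd, Finsupp.single_apply]

lemma dd_eq_iff {i j i' j' : ℕ} : dd i j = dd i' j' ↔ i = i' ∧ j = j' := by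
  constructor
  · intro h
    constructor
    · have := DFunLike.congr_fun h 0
      simpa [dd_apply0] using this
    · have := DFunLike.congr_fun h 1
      simpa [dd_apply1] using this
  · rintro ⟨rfl, rfl⟩; rfl

lemma dd_prod {M : Type*} [CommMonoid M] (v : Fin 2 → M) (i j : ℕ) :
    (dd i j).prod (fun n k => v n ^ k) = v 0 ^ i * v 1 ^ j := by
  rw [dd, Finsupp.prod_add_index' (fun _ => pow_zero _) (fun _ _ _ => pow_add _ _ _)]
  simp [Finsupp.prod_single_index]

lemma mon_eq {R : Type*} [CommSemiring R] (i j : ℕ) (r : R) :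
    monomial (dd i j) r = C r * X 0 ^ i * X 1 ^ j := by
  rw [monomial_eq, dd_prod, mul_assoc]

lemma binom_id (n : ℕ) : ∑ i ∈ Finset.range (n+1),
    (Polynomial.X : Polynomial ℝ)^i * (1 - Polynomial.X)^(n - i) * (n.choose i : Polynomial ℝ) = 1 := by
  rw [← add_pow]
  have h : (Polynomial.X + (1 - Polynomial.X) : Polynomial ℝ) = 1 := by ring
  rw [h, one_pow]

lemma bind_mon (η : ℂ) (i j : ℕ) (h : η ^ (i + j) = 1) (z : ℂ) :
    MvPolynomial.bind₁ ![MvPolynomial.C η * MvPolynomial.X 0, MvPolynomial.C η * MvPolynomial.X 1]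
      ((monomial (dd i j)) z) = (monomial (dd i j)) z := by
  rw [mon_eq, map_mul, map_mul, map_pow, map_pow, bind₁_X_right, bind₁_X_right, algHom_C]
  simp only [Matrix.cons_val_zero, Matrix.cons_val_one, Matrix.head_cons]
  have key : ((C η * X 0 : MvPolynomial (Fin 2) ℂ)) ^ i * ((C η * X 1)) ^ j
      = C (η ^ (i + j)) * (X 0 ^ i * X 1 ^ j) := by
    rw [mul_pow, mul_pow, ← map_pow C η i, ← map_pow C η j, pow_add, map_mul]
    ring
  rw [mul_assoc, key, h, map_one, one_mul, MvPolynomial.algebraMap_eq, mul_assoc]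

lemma aeval_mon (i j : ℕ) (r : ℝ) :
    MvPolynomial.aeval ![(Polynomial.X : Polynomial ℝ), 1 - Polynomial.X] ((monomial (dd i j)) r)
      = Polynomial.X ^ i * (1 - Polynomial.X) ^ j * Polynomial.C r := by
  rw [mon_eq, map_mul, map_mul, map_pow, map_pow, aeval_X, aeval_X, aeval_C,
    Polynomial.algebraMap_eq]
  simp only [Matrix.cons_val_zero, Matrix.cons_val_one, Matrix.head_cons]
  ring

theorem stmt_15 (m : ℕ) (hm : 1 ≤ m) (η : ℂ) (hη : IsPrimitiveRoot η m)
    (N : ℕ) (hN : 2 * m + 1 ≤ N) :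
    ∃ G : MvPolynomial (Fin 2) ℝ,
      MvPolynomial.bind₁
          ![MvPolynomial.C η * MvPolynomial.X 0, MvPolynomial.C η * MvPolynomial.X 1]
          (G.map (algebraMap ℝ ℂ)) = G.map (algebraMap ℝ ℂ) ∧
      MvPolynomial.aeval ![(Polynomial.X : Polynomial ℝ), 1 - Polynomial.X] G = 1 ∧
      (∀ α, 0 ≤ G.coeff α) ∧
      MvPolynomial.constantCoeff G = 0 ∧
      G.support.card = N := by
  classical
  have hm0 : 0 < m := hm
  set M := N - m - 1 with hM
  have hMm : m ≤ M := by omega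
  set t := M % m with ht
  set K := M / m * m with hK
  have hKdvd : m ∣ K := ⟨M / m, by rw [hK]; ring⟩
  have htm : t < m := Nat.mod_lt _ hm0
  have hKm : m ≤ K := by
    have h1 : 1 ≤ M / m := (Nat.one_le_div_iff hm0).mpr hMm
    calc m = 1 * m := (one_mul m).symm
      _ ≤ M / m * m := Nat.mul_le_mul_right m h1
  have hMeq : K + t = M := by rw [hK, ht]; exact Nat.div_add_mod' M m
  have hNeq : N = m + (K + t + 1) := by omega
  set c : ℝ := if t = 0 then 0 else (m.choose t : ℝ) / 2 with hc
  have hc0 : 0 ≤ c := by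
    rw [hc]; split
    · exact le_refl 0
    · positivity
  set a : ℕ → ℝ := fun i => (m.choose i : ℝ) - (if i = t then c else 0) with hA
  set b : ℕ → ℝ := fun j => (K.choose j : ℝ) + (if t ≤ j then c * (K.choose (j - t) : ℝ) else 0)
    with hB
  have ha_pos : ∀ i ∈ Finset.Icc 1 m, 0 < a i := by
    intro i hi
    rw [Finset.mem_Icc] at hi
    simp only [hA]
    by_cases hit : i = t
    · subst hit
      have ht0 : t ≠ 0 := by omega
      rw [if_pos rfl, hc, if_neg ht0]
      have : (0 : ℝ) < (m.choose t : ℝ) := by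
        exact_mod_cast Nat.choose_pos (le_of_lt htm)
      linarith
    · rw [if_neg hit, sub_zero]
      exact_mod_cast Nat.choose_pos hi.2
  have hb_pos : ∀ j ∈ Finset.range (K + t + 1), 0 < b j := by
    intro j hj
    rw [Finset.mem_range] at hj
    simp only [hB]
    rcases le_or_gt j K with hjK | hjK
    · have h1 : (0 : ℝ) < (K.choose j : ℝ) := by exact_mod_cast Nat.choose_pos hjK
      have h2 : (0 : ℝ) ≤ (if t ≤ j then c * (K.choose (j - t) : ℝ) else 0) := by
        split
        · positivity
        · exact le_refl 0
      linarith
    · have ht0 : t ≠ 0 := by omega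
      have htj : t ≤ j := by omega
      have hjt : j - t ≤ K := by omega
      have hc1 : (0 : ℝ) < c := by
        rw [hc, if_neg ht0]
        have : (0 : ℝ) < (m.choose t : ℝ) := by
          exact_mod_cast Nat.choose_pos (le_of_lt htm)
        linarith
      have h1 : (0 : ℝ) ≤ (K.choose j : ℝ) := by positivity
      have h2 : (0 : ℝ) < c * (K.choose (j - t) : ℝ) := by
        have : (0 : ℝ) < (K.choose (j - t) : ℝ) := by exact_mod_cast Nat.choose_pos hjt
        positivity
      rw [if_pos htj]
      linarith
  set G : MvPolynomial (Fin 2) ℝ :=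
    (∑ i ∈ Finset.Icc 1 m, (monomial (dd i (m - i))) (a i)) +
    (∑ j ∈ Finset.range (K + t + 1), (monomial (dd j (m + K - j))) (b j)) with hG
  have coeff_G : ∀ α, G.coeff α =
      (∑ i ∈ Finset.Icc 1 m, if dd i (m - i) = α then a i else 0) +
      (∑ j ∈ Finset.range (K + t + 1), if dd j (m + K - j) = α then b j else 0) := by
    intro α
    rw [hG, coeff_add, coeff_sum, coeff_sum]
    simp [coeff_monomial]
  refine ⟨G, ?_, ?_, ?_, ?_, ?_⟩
  · -- invariance
    obtain ⟨u, hu⟩ := hKdvd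
    have hηm : η ^ m = 1 := hη.pow_eq_one
    rw [hG, map_add, map_sum, map_sum, map_add, map_sum, map_sum]
    congr 1
    · apply Finset.sum_congr rfl
      intro i hi
      rw [Finset.mem_Icc] at hi
      rw [map_monomial]
      apply bind_mon
      have : i + (m - i) = m := by omega
      rw [this, hηm]
    · apply Finset.sum_congr rfl
      intro j hj
      rw [Finset.mem_range] at hj
      rw [map_monomial]
      apply bind_mon
      have h1 : j + (m + K - j) = m + K := by omega
      rw [h1, hu, show m + m * u = m * (1 + u) by ring, pow_mul, hηm, one_pow]
  · -- evaluation
    rw [hG, map_add, map_sum, map_sum]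
    simp only [aeval_mon]
    have h1 : ∑ i ∈ Finset.Icc 1 m,
        Polynomial.X ^ i * (1 - Polynomial.X) ^ (m - i) * Polynomial.C (a i)
        = (∑ i ∈ Finset.Icc 1 m,
            Polynomial.X ^ i * (1 - Polynomial.X) ^ (m - i) * (m.choose i : Polynomial ℝ))
          - (∑ i ∈ Finset.Icc 1 m,
            if i = t then Polynomial.C c * Polynomial.X ^ i * (1 - Polynomial.X) ^ (m - i)
            else 0) := by
      rw [← Finset.sum_sub_distrib]
      apply Finset.sum_congr rfl
      intro i _
      simp only [hA]
      by_cases hit : i = t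
      · rw [if_pos hit, if_pos hit, map_sub, Polynomial.C_eq_natCast]
        ring
      · rw [if_neg hit, if_neg hit, sub_zero, Polynomial.C_eq_natCast, sub_zero]
    have h2 : (∑ i ∈ Finset.Icc 1 m,
        Polynomial.X ^ i * (1 - Polynomial.X) ^ (m - i) * (m.choose i : Polynomial ℝ))
        = 1 - (1 - Polynomial.X) ^ m := by
      have hins : Finset.range (m + 1) = insert 0 (Finset.Icc 1 m) := by
        ext x; simp only [Finset.mem_range, Finset.mem_insert, Finset.mem_Icc]; omega
      have hb := binom_id m
      rw [hins, Finset.sum_insert (by simp)] at hb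
      simp only [pow_zero, one_mul, Nat.choose_zero_right, Nat.cast_one, mul_one,
        Nat.sub_zero] at hb
      linear_combination hb
    have h3 : (∑ i ∈ Finset.Icc 1 m,
        if i = t then Polynomial.C c * Polynomial.X ^ i * (1 - Polynomial.X) ^ (m - i) else 0)
        = Polynomial.C c * Polynomial.X ^ t * (1 - Polynomial.X) ^ (m - t) := by
      rw [Finset.sum_ite_eq' (Finset.Icc 1 m)
        t (fun i => Polynomial.C c * Polynomial.X ^ i * (1 - Polynomial.X) ^ (m - i))]
      by_cases ht0 : t = 0
      · rw [if_neg (by simp [ht0])]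
        rw [hc, if_pos ht0]
        simp [ht0]
      · rw [if_pos (Finset.mem_Icc.mpr ⟨by omega, by omega⟩)]
    have h4 : ∑ j ∈ Finset.range (K + t + 1),
        Polynomial.X ^ j * (1 - Polynomial.X) ^ (m + K - j) * Polynomial.C (b j)
        = (∑ j ∈ Finset.range (K + t + 1),
            Polynomial.X ^ j * (1 - Polynomial.X) ^ (m + K - j) * (K.choose j : Polynomial ℝ))
          + (∑ j ∈ Finset.range (K + t + 1),
            if t ≤ j then Polynomial.C c * (K.choose (j - t) : Polynomial ℝ)
              * Polynomial.X ^ j * (1 - Polynomial.X) ^ (m + K - j) else 0) := by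
      rw [← Finset.sum_add_distrib]
      apply Finset.sum_congr rfl
      intro j _
      simp only [hB]
      by_cases hjt : t ≤ j
      · rw [if_pos hjt, if_pos hjt, map_add, Polynomial.C_eq_natCast, map_mul, Polynomial.C_eq_natCast]
        ring
      · rw [if_neg hjt, if_neg hjt, add_zero, Polynomial.C_eq_natCast, add_zero]
    have h5 : (∑ j ∈ Finset.range (K + t + 1),
        Polynomial.X ^ j * (1 - Polynomial.X) ^ (m + K - j) * (K.choose j : Polynomial ℝ))
        = (1 - Polynomial.X) ^ m := by
      rw [← Finset.sum_subset (Finset.range_subset_range.mpr (by omega : K + 1 ≤ K + t + 1))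
        (by
          intro j hj hnj
          rw [Finset.mem_range] at hj
          rw [Finset.mem_range] at hnj
          have : K < j := by omega
          rw [Nat.choose_eq_zero_of_lt this]
          simp)]
      have : ∀ j ∈ Finset.range (K + 1),
          Polynomial.X ^ j * (1 - Polynomial.X) ^ (m + K - j) * (K.choose j : Polynomial ℝ)
          = (Polynomial.X ^ j * (1 - Polynomial.X) ^ (K - j) * (K.choose j : Polynomial ℝ))
            * (1 - Polynomial.X) ^ m := by
        intro j hj
        rw [Finset.mem_range] at hj
        have he : m + K - j = (K - j) + m := by omega
        rw [he, pow_add]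
        ring
      rw [Finset.sum_congr rfl this, ← Finset.sum_mul, binom_id K, one_mul]
    have h6 : (∑ j ∈ Finset.range (K + t + 1),
        if t ≤ j then Polynomial.C c * (K.choose (j - t) : Polynomial ℝ)
          * Polynomial.X ^ j * (1 - Polynomial.X) ^ (m + K - j) else 0)
        = Polynomial.C c * Polynomial.X ^ t * (1 - Polynomial.X) ^ (m - t) := by
      rw [← Finset.sum_subset (by
          intro x hx
          rw [Finset.mem_Ico] at hx
          rw [Finset.mem_range]
          omega : Finset.Ico t (K + t + 1) ⊆ Finset.range (K + t + 1))
        (by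
          intro j hj hnj
          rw [Finset.mem_range] at hj
          rw [Finset.mem_Ico] at hnj
          rw [if_neg (by omega)])]
      rw [Finset.sum_Ico_eq_sum_range]
      have hcnt : K + t + 1 - t = K + 1 := by omega
      rw [hcnt]
      have : ∀ j ∈ Finset.range (K + 1),
          (if t ≤ t + j then Polynomial.C c * (K.choose (t + j - t) : Polynomial ℝ)
            * Polynomial.X ^ (t + j) * (1 - Polynomial.X) ^ (m + K - (t + j)) else 0)
          = (Polynomial.C c * Polynomial.X ^ t * (1 - Polynomial.X) ^ (m - t))
            * (Polynomial.X ^ j * (1 - Polynomial.X) ^ (K - j) * (K.choose j : Polynomial ℝ)) := by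
        intro j hj
        rw [Finset.mem_range] at hj
        rw [if_pos (by omega)]
        have he1 : t + j - t = j := by omega
        have he2 : m + K - (t + j) = (K - j) + (m - t) := by omega
        rw [he1, he2, pow_add, pow_add]
        ring
      rw [Finset.sum_congr rfl this, ← Finset.mul_sum, binom_id K, mul_one]
    rw [h1, h2, h3, h4, h5, h6]
    ring
  · -- nonneg
    intro α
    rw [coeff_G]
    have hA1 : (0:ℝ) ≤ ∑ i ∈ Finset.Icc 1 m, if dd i (m - i) = α then a i else 0 := by
      apply Finset.sum_nonneg
      intro i hi
      split
      · exact (ha_pos i hi).le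
      · exact le_refl 0
    have hB1 : (0:ℝ) ≤ ∑ j ∈ Finset.range (K + t + 1), if dd j (m + K - j) = α then b j else 0 := by
      apply Finset.sum_nonneg
      intro j hj
      split
      · exact (hb_pos j hj).le
      · exact le_refl 0
    linarith
  · -- constant coeff
    rw [constantCoeff_eq]
    show G.coeff 0 = 0
    rw [coeff_G]
    rw [Finset.sum_eq_zero, Finset.sum_eq_zero, add_zero]
    · intro j hj
      rw [Finset.mem_range] at hj
      rw [if_neg]
      intro h
      have h0 := dd_apply0 j (m + K - j)
      rw [h] at h0
      have h1 := dd_apply1 j (m + K - j)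
      rw [h] at h1
      simp at h0 h1
      omega
    · intro i hi
      rw [Finset.mem_Icc] at hi
      rw [if_neg]
      intro h
      have h0 := dd_apply0 i (m - i)
      rw [h] at h0
      simp at h0
      omega
  · -- support card
    have hsupp : G.support =
        (Finset.Icc 1 m).image (fun i => dd i (m - i)) ∪
        (Finset.range (K + t + 1)).image (fun j => dd j (m + K - j)) := by
      ext α
      rw [MvPolynomial.mem_support_iff, coeff_G, Finset.mem_union]
      constructor
      · intro h
        by_contra hns
        push_neg at hns
        obtain ⟨hn1, hn2⟩ := hns
        apply h
        rw [Finset.sum_eq_zero, Finset.sum_eq_zero, add_zero]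
        · intro j hj
          rw [if_neg]
          intro hEq
          exact hn2 (Finset.mem_image.mpr ⟨j, hj, hEq⟩)
        · intro i hi
          rw [if_neg]
          intro hEq
          exact hn1 (Finset.mem_image.mpr ⟨i, hi, hEq⟩)
      · intro h
        rcases h with h | h
        · obtain ⟨i, hi, rfl⟩ := Finset.mem_image.mp h
          have hi' := Finset.mem_Icc.mp hi
          rw [Finset.sum_eq_single i, if_pos rfl, Finset.sum_eq_zero, add_zero]
          · exact (ha_pos i hi).ne'
          · intro j hj
            rw [Finset.mem_range] at hj
            rw [if_neg]
            intro hEq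
            obtain ⟨he1, he2⟩ := dd_eq_iff.mp hEq
            omega
          · intro i' hi' hne
            rw [if_neg]
            intro hEq
            obtain ⟨he1, he2⟩ := dd_eq_iff.mp hEq
            exact hne he1
          · intro hni
            exact absurd hi hni
        · obtain ⟨j, hj, rfl⟩ := Finset.mem_image.mp h
          have hj' := Finset.mem_range.mp hj
          rw [Finset.sum_eq_zero, zero_add, Finset.sum_eq_single j, if_pos rfl]
          · exact (hb_pos j hj).ne'
          · intro j' hj'' hne
            rw [if_neg]
            intro hEq
            obtain ⟨he1, he2⟩ := dd_eq_iff.mp hEq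
            exact hne he1
          · intro hnj
            exact absurd hj hnj
          · intro i hi
            rw [Finset.mem_Icc] at hi
            rw [if_neg]
            intro hEq
            obtain ⟨he1, he2⟩ := dd_eq_iff.mp hEq
            omega
    rw [hsupp]
    have hinj1 : Set.InjOn (fun i => dd i (m - i)) (Finset.Icc 1 m) := by
      intro x _ y _ hxy
      exact (dd_eq_iff.mp hxy).1
    have hinj2 : Set.InjOn (fun j => dd j (m + K - j)) (Finset.range (K + t + 1)) := by
      intro x _ y _ hxy
      exact (dd_eq_iff.mp hxy).1
    have hdisj : Disjoint ((Finset.Icc 1 m).image (fun i => dd i (m - i)))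
        ((Finset.range (K + t + 1)).image (fun j => dd j (m + K - j))) := by
      rw [Finset.disjoint_left]
      intro α h1 h2
      obtain ⟨i, hi, hEq1⟩ := Finset.mem_image.mp h1
      obtain ⟨j, hj, hEq2⟩ := Finset.mem_image.mp h2
      rw [Finset.mem_Icc] at hi
      rw [Finset.mem_range] at hj
      rw [← hEq2] at hEq1
      obtain ⟨he1, he2⟩ := dd_eq_iff.mp hEq1
      omega
    rw [Finset.card_union_of_disjoint hdisj, Finset.card_image_of_injOn hinj1,
      Finset.card_image_of_injOn hinj2, Nat.card_Icc, Finset.card_range]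
    omega
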